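/- If the data embedding is equivariant, U(V_s[x]) = U_s U(x) U_s† for all s, the trainable unitaries W_i commute with each U_s, the initial state ψ₀ satisfies U_s ψ₀ = ψ₀, and the observable O satisfies U_s O U_s† = O, then the prediction y(x) = ⟨ψ(x)| O |ψ(x)⟩ with ψ(x) = W_L U(x) ⋯ W_1 U(x) W_0 ψ₀ is invariant: y(V_s[x]) = y(x) for all s ∈ S and all x. -/

import Mathlib

/-!
Conjugation `X ↦ U X U†` by a representation unitary `U` is a ring automorphism fixing every
trainable block, so it commutes with building the circuit: the circuit on `V_s[x]` is `U C(x) U†`.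
Since `U† ψ₀ = ψ₀`, the output state on `V_s[x]` is `U ψ(x)`, and `U† O U = O` makes the
expectation value unchanged.
-/

open Matrix

noncomputable section

/-- The circuit `W_L A W_{L-1} A ⋯ W_1 A W_0` of a re-uploading model, with trainable
blocks `W i` interleaved with the data-encoding unitary `A`. -/
def circuit {n : ℕ} (W : ℕ → Matrix (Fin n) (Fin n) ℂ) (A : Matrix (Fin n) (Fin n) ℂ) :
    ℕ → Matrix (Fin n) (Fin n) ℂ
  | 0 => W 0
  | (k + 1) => W (k + 1) * A * circuit W A k

theorem circuit_map {n : ℕ} {F : Type*}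
    [FunLike F (Matrix (Fin n) (Fin n) ℂ) (Matrix (Fin n) (Fin n) ℂ)]
    [MulHomClass F (Matrix (Fin n) (Fin n) ℂ) (Matrix (Fin n) (Fin n) ℂ)] (f : F)
    (W : ℕ → Matrix (Fin n) (Fin n) ℂ) (A : Matrix (Fin n) (Fin n) ℂ) {k : ℕ}
    (hW : ∀ i ≤ k, f (W i) = W i) :
    circuit W (f A) k = f (circuit W A k) := by
  induction k with
  | zero => exact (hW 0 le_rfl).symm
  | succ k ih =>
    rw [circuit, circuit, ih fun i hi => hW i (Nat.le_succ_of_le hi), map_mul, map_mul,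
      hW (k + 1) le_rfl]

theorem star_mul_mul_eq_of_mul_mul_star_eq {R : Type*} [Monoid R] [StarMul R] {u x : R}
    (hu : u ∈ unitary R) (h : u * x * star u = x) : star u * x * u = x :=
  (commute_unitary_iff_star_left_conjugate hu).mp
    ((commute_unitary_iff_star_right_conjugate hu).mpr h)

namespace Matrix

variable {m R : Type*} [Fintype m]

theorem star_mulVec_eq_of_mem_unitary_of_mulVec_eq [DecidableEq m] [CommSemiring R] [StarRing R]
    {u : Matrix m m R} (hu : u ∈ unitary (Matrix m m R)) {v : m → R} (h : u *ᵥ v = v) :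
    star u *ᵥ v = v := by
  conv_lhs => rw [← h]
  rw [mulVec_mulVec, Unitary.star_mul_self_of_mem hu, one_mulVec]

theorem star_mulVec_dotProduct_mulVec_mulVec [CommSemiring R] [StarRing R]
    (u O : Matrix m m R) (v : m → R) :
    star (u *ᵥ v) ⬝ᵥ O *ᵥ (u *ᵥ v) = star v ⬝ᵥ (star u * O * u) *ᵥ v := by
  rw [star_mulVec, mulVec_mulVec, ← dotProduct_mulVec, mulVec_mulVec, ← mul_assoc,
    star_eq_conjTranspose]

end Matrix

theorem invariant_reuploading_model_general {n : ℕ} {S D : Type*} [Group S]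
    (Urep : S →* Matrix.unitaryGroup (Fin n) ℂ)    -- unitary representation of `S`
    (V : S → D → D)                                -- action of `S` on the data space
    (enc : D → Matrix (Fin n) (Fin n) ℂ)           -- data encoding
    (L : ℕ) (W : ℕ → Matrix (Fin n) (Fin n) ℂ)     -- trainable blocks `W_0, …, W_L`
    (ψ₀ : Fin n → ℂ) (O : Matrix (Fin n) (Fin n) ℂ)
    (henc : ∀ (s : S) (x : D), enc (V s x) =
      (Urep s : Matrix (Fin n) (Fin n) ℂ) * enc x * star (Urep s : Matrix (Fin n) (Fin n) ℂ))
    (hW : ∀ i ≤ L, ∀ s : S, Commute (W i) (Urep s : Matrix (Fin n) (Fin n) ℂ))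
    (hψ₀ : ∀ s : S, (Urep s : Matrix (Fin n) (Fin n) ℂ).mulVec ψ₀ = ψ₀)
    (hOinv : ∀ s : S, (Urep s : Matrix (Fin n) (Fin n) ℂ) * O *
      star (Urep s : Matrix (Fin n) (Fin n) ℂ) = O) :
    ∀ (s : S) (x : D),
      star ((circuit W (enc (V s x)) L).mulVec ψ₀) ⬝ᵥ
          O.mulVec ((circuit W (enc (V s x)) L).mulVec ψ₀) =
        star ((circuit W (enc x) L).mulVec ψ₀) ⬝ᵥ
          O.mulVec ((circuit W (enc x) L).mulVec ψ₀) := by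
  intro s x
  set u := Urep s
  set U : Matrix (Fin n) (Fin n) ℂ := ↑u
  let conj := Unitary.conjStarAlgAut ℂ (Matrix (Fin n) (Fin n) ℂ) u
  have hW_fixed : ∀ i ≤ L, conj (W i) = W i := fun i hi =>
    (commute_unitary_iff_star_right_conjugate u.2).mp (hW i hi s).symm
  have hψ₀_star : star U *ᵥ ψ₀ = ψ₀ :=
    star_mulVec_eq_of_mem_unitary_of_mulVec_eq u.2 (hψ₀ s)
  have hcircuit : circuit W (enc (V s x)) L = U * circuit W (enc x) L * star U := by
    rw [henc s x]
    exact circuit_map conj W (enc x) hW_fixed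
  rw [hcircuit, ← mulVec_mulVec, ← mulVec_mulVec, hψ₀_star,
    star_mulVec_dotProduct_mulVec_mulVec, star_mul_mul_eq_of_mul_mul_star_eq u.2 (hOinv s)]

/-- If the data embedding is equivariant, the trainable unitaries commute with the
representation, the initial state is invariant and the observable is invariant, then the
prediction `y(x) = ⟨ψ(x)|O|ψ(x)⟩` of the re-uploading model is invariant:
`y(V_s[x]) = y(x)`. -/
theorem invariant_reuploading_model {n : ℕ} {S D : Type*} [Group S]
    (Urep : S →* Matrix.unitaryGroup (Fin n) ℂ)    -- unitary representation of `S`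
    (V : S → D → D)                                -- action of `S` on the data space
    (enc : D → Matrix (Fin n) (Fin n) ℂ)           -- data encoding
    (L : ℕ) (W : ℕ → Matrix (Fin n) (Fin n) ℂ)     -- trainable blocks `W_0, …, W_L`
    (ψ₀ : Fin n → ℂ) (O : Matrix (Fin n) (Fin n) ℂ)
    (hencU : ∀ x, enc x ∈ Matrix.unitaryGroup (Fin n) ℂ)
    (henc : ∀ (s : S) (x : D), enc (V s x) =
      (Urep s : Matrix (Fin n) (Fin n) ℂ) * enc x * star (Urep s : Matrix (Fin n) (Fin n) ℂ))
    (hWU : ∀ i ≤ L, W i ∈ Matrix.unitaryGroup (Fin n) ℂ)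
    (hW : ∀ i ≤ L, ∀ s : S, Commute (W i) (Urep s : Matrix (Fin n) (Fin n) ℂ))
    (hψ₀ : ∀ s : S, (Urep s : Matrix (Fin n) (Fin n) ℂ).mulVec ψ₀ = ψ₀)
    (hψ₀norm : star ψ₀ ⬝ᵥ ψ₀ = 1)
    (hO : O.IsHermitian)
    (hOinv : ∀ s : S, (Urep s : Matrix (Fin n) (Fin n) ℂ) * O *
      star (Urep s : Matrix (Fin n) (Fin n) ℂ) = O) :
    ∀ (s : S) (x : D),
      star ((circuit W (enc (V s x)) L).mulVec ψ₀) ⬝ᵥ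
          O.mulVec ((circuit W (enc (V s x)) L).mulVec ψ₀) =
        star ((circuit W (enc x) L).mulVec ψ₀) ⬝ᵥ
          O.mulVec ((circuit W (enc x) L).mulVec ψ₀) :=
  invariant_reuploading_model_general Urep V enc L W ψ₀ O henc hW hψ₀ hOinv
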